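/- arXiv:1201.6015 — 2 statements merged into one kernel-verified Lean document; each statement's English description precedes it below -/
import Mathlib

section
/- For α ∈ (0,2), α ≠ 1, u(x) = 1 - x² on (-1,1) and u = 0 outside, the nonlocal operator applied to u satisfies ∫_{ℝ∖{0}} [u(x+y) - u(x) - 1_{|y|<δ(x)} y u'(x)] |y|^{-(1+α)} dy = -(1+x)^{1-α}((1-x)/α - 2x/(1-α) + (1+x)/(2-α)) - (1-x)^{1-α}((1+x)/α + 2x/(1-α) + (1-x)/(2-α)) for x ∈ (-1,1), where δ(x) = min(1+x, 1-x) and the integral is a principal value. -/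
/-!
The compensator `1_{|y|<δ} y u'(x) |y|^{-1-α}` is odd, so it integrates to zero over the
symmetric set `{ε < |y|}` whatever `δ` is; and since `u` is even, the reflection `y ↦ -y` turns
the integral of the increment over `y < -ε` into the integral over `y > ε` at the point `-x`.
On `y > ε` the increment `u(x+y) - u(x)` is `-2xy - y²` up to `y = 1 - x` and `-(1 - x²)`
beyond, so the one-sided integral is elementary. The `ε^{1-α}` terms of the two sides cancel,
and the truncated integral differs from the claimed value by `2 ε^{2-α} / (2 - α) → 0`.
-/

open MeasureTheory Filter Set Real

theorem Function.Odd.integral_eq_zero {G E : Type*} [MeasurableSpace G] [AddGroup G]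
    [MeasurableNeg G] [NormedAddCommGroup E] [NormedSpace ℝ E] {f : G → E}
    (hf : Function.Odd f) (μ : Measure G) [μ.IsNegInvariant] : ∫ x, f x ∂μ = 0 := by
  have h := integral_neg_eq_self f μ
  simp only [hf _, integral_neg] at h
  have h2 : (2 : ℝ) • ∫ x, f x ∂μ = 0 := by
    rw [two_smul]
    nth_rewrite 1 [← h]
    exact neg_add_cancel _
  exact (smul_eq_zero.mp h2).resolve_left two_ne_zero

theorem integrableOn_abs_gt_ite_abs_lt_mul_rpow (c r δ : ℝ) {ε : ℝ} (hε : 0 < ε) :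
    IntegrableOn (fun y : ℝ => (if |y| < δ then y * c else 0) * |y| ^ r) {y | ε < |y|} := by
  have hS : MeasurableSet {y : ℝ | ε < |y|} :=
    measurableSet_lt measurable_const continuous_abs.measurable
  have hT : MeasurableSet {y : ℝ | |y| < δ} :=
    measurableSet_lt continuous_abs.measurable measurable_const
  set K := Icc (-δ) δ ∩ {y : ℝ | ε ≤ |y|}
  have hK : IsCompact K := isCompact_Icc.inter_right (isClosed_le continuous_const continuous_abs)
  have hcont : ContinuousOn (fun y : ℝ => y * c * |y| ^ r) K :=
    (continuous_id.mul continuous_const).continuousOn.mul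
      (continuous_abs.continuousOn.rpow_const fun y hy => Or.inl (hε.trans_le hy.2).ne')
  refine (((hcont.integrableOn_compact hK).mono_set ?_).congr_fun ?_ (hS.inter hT))
    |>.of_forall_sdiff_eq_zero hS ?_
  · rintro y ⟨hεy, hyδ⟩
    exact ⟨abs_le.mp hyδ.out.le, hεy.out.le⟩
  · rintro y ⟨-, hyδ⟩
    simp only [if_pos hyδ.out]
  · rintro y ⟨hεy, hy⟩
    rw [if_neg fun h : |y| < δ => hy ⟨hεy, h⟩, zero_mul]

theorem integral_abs_gt_ite_abs_lt_mul_rpow (c r δ ε : ℝ) :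
    ∫ y in {y : ℝ | ε < |y|}, (if |y| < δ then y * c else 0) * |y| ^ r = 0 := by
  rw [← integral_indicator (measurableSet_lt measurable_const continuous_abs.measurable)]
  refine Function.Odd.integral_eq_zero (fun y => ?_) volume
  simp only [indicator, mem_ofPred_eq, abs_neg]
  split_ifs <;> ring

theorem tendsto_add_mul_rpow_nhdsGT_zero (C a : ℝ) {b : ℝ} (hb : 0 < b) :
    Tendsto (fun ε : ℝ => C + a * ε ^ b) (nhdsWithin 0 (Ioi 0)) (nhds C) := by
  have h := (continuous_rpow_const hb.le).tendsto' 0 0 (zero_rpow hb.ne')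
  simpa using tendsto_nhdsWithin_of_tendsto_nhds ((h.const_mul a).const_add C)

theorem setOf_lt_abs_eq (ε : ℝ) : {y : ℝ | ε < |y|} = Iio (-ε) ∪ Ioi ε := by
  ext y
  simp [lt_abs, lt_neg, or_comm]

noncomputable def parabolaBump (z : ℝ) : ℝ := if z ∈ Ioo (-1 : ℝ) 1 then 1 - z ^ 2 else 0

theorem parabolaBump_of_mem_Icc {z : ℝ} (hz : z ∈ Icc (-1 : ℝ) 1) :
    parabolaBump z = 1 - z ^ 2 := by
  unfold parabolaBump
  split_ifs with h
  · rfl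
  · have : z = -1 ∨ z = 1 := by
      by_contra! hne
      exact h ⟨lt_of_le_of_ne hz.1 hne.1.symm, lt_of_le_of_ne hz.2 hne.2⟩
    rcases this with rfl | rfl <;> norm_num

theorem parabolaBump_of_one_le {z : ℝ} (hz : 1 ≤ z) : parabolaBump z = 0 :=
  if_neg fun h => h.2.not_ge hz

theorem parabolaBump_neg (z : ℝ) : parabolaBump (-z) = parabolaBump z := by
  simp only [parabolaBump, mem_Ioo, neg_lt, neg_neg, even_two, Even.neg_pow, and_comm]

theorem parabolaBump_add_neg_sub (x y : ℝ) :
    parabolaBump (x + -y) - parabolaBump x = parabolaBump (-x + y) - parabolaBump (-x) := by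
  rw [← parabolaBump_neg (x + -y), ← parabolaBump_neg x, neg_add, neg_neg]

section Increment

variable {α x y ε : ℝ}

theorem parabolaBump_sub_mul_rpow_of_le (hx : x ∈ Ioo (-1 : ℝ) 1) (hy : 0 < y)
    (hyx : y ≤ 1 - x) :
    (parabolaBump (x + y) - parabolaBump x) * |y| ^ (-(1 + α)) =
      -(2 * x) * y ^ (-α) - y ^ (1 - α) := by
  rw [abs_of_pos hy, parabolaBump_of_mem_Icc ⟨by linarith [hx.1], by linarith⟩,
    parabolaBump_of_mem_Icc (Ioo_subset_Icc_self hx), show -α = -(1 + α) + 1 by ring,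
    show 1 - α = -(1 + α) + 1 + 1 by ring, rpow_add_one hy.ne', rpow_add_one hy.ne',
    rpow_add_one hy.ne']
  ring

theorem parabolaBump_sub_mul_rpow_of_ge (hx : x ∈ Ioo (-1 : ℝ) 1) (hyx : 1 - x ≤ y) :
    (parabolaBump (x + y) - parabolaBump x) * |y| ^ (-(1 + α)) =
      -((1 + x) * (1 - x)) * y ^ (-(1 + α)) := by
  rw [abs_of_pos (by linarith [hx.2]), parabolaBump_of_one_le (by linarith),
    parabolaBump_of_mem_Icc (Ioo_subset_Icc_self hx)]
  ring

theorem integrableOn_Ioc_parabolaBump_sub_mul_rpow (hα : α < 2) (hx : x ∈ Ioo (-1 : ℝ) 1)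
    (hε : 0 < ε) (hεx : ε ≤ 1 - x) :
    IntegrableOn (fun y => (parabolaBump (x + y) - parabolaBump x) * |y| ^ (-(1 + α)))
      (Ioc ε (1 - x)) := by
  have hg : IntervalIntegrable (fun y => -(2 * x) * y ^ (-α) - y ^ (1 - α)) volume ε (1 - x) :=
    ((intervalIntegral.intervalIntegrable_rpow (Or.inr (notMem_uIcc_of_lt hε (hε.trans_le hεx))))
      |>.const_mul _).sub (intervalIntegral.intervalIntegrable_rpow' (by linarith))
  refine ((intervalIntegrable_iff_integrableOn_Ioc_of_le hεx).mp hg).congr_fun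
    (fun y hy => ?_) measurableSet_Ioc
  exact (parabolaBump_sub_mul_rpow_of_le hx (hε.trans hy.1) hy.2).symm

theorem integral_Ioc_parabolaBump_sub_mul_rpow (hα : α < 2) (hα1 : α ≠ 1)
    (hx : x ∈ Ioo (-1 : ℝ) 1) (hε : 0 < ε) (hεx : ε ≤ 1 - x) :
    ∫ y in Ioc ε (1 - x), (parabolaBump (x + y) - parabolaBump x) * |y| ^ (-(1 + α)) =
      -(2 * x) * (((1 - x) ^ (1 - α) - ε ^ (1 - α)) / (1 - α)) -
        ((1 - x) ^ (2 - α) - ε ^ (2 - α)) / (2 - α) := by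
  have h0 : (0 : ℝ) ∉ uIcc ε (1 - x) := notMem_uIcc_of_lt hε (hε.trans_le hεx)
  rw [setIntegral_congr_fun measurableSet_Ioc
      (fun y hy => parabolaBump_sub_mul_rpow_of_le hx (hε.trans hy.1) hy.2),
    ← intervalIntegral.integral_of_le hεx,
    intervalIntegral.integral_sub
      ((intervalIntegral.intervalIntegrable_rpow (Or.inr h0)).const_mul _)
      (intervalIntegral.intervalIntegrable_rpow' (by linarith)),
    intervalIntegral.integral_const_mul,
    integral_rpow (Or.inr ⟨fun h => hα1 (by linarith), h0⟩),
    integral_rpow (Or.inl (by linarith))]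
  ring_nf

theorem integral_Ioi_one_sub_parabolaBump_sub_mul_rpow (hα : 0 < α)
    (hx : x ∈ Ioo (-1 : ℝ) 1) :
    ∫ y in Ioi (1 - x), (parabolaBump (x + y) - parabolaBump x) * |y| ^ (-(1 + α)) =
      -((1 + x) * (1 - x) ^ (1 - α)) / α := by
  have hx1 : 0 < 1 - x := by linarith [hx.2]
  rw [setIntegral_congr_fun measurableSet_Ioi
      (fun y hy => parabolaBump_sub_mul_rpow_of_ge hx (le_of_lt hy)),
    integral_const_mul, integral_Ioi_rpow_of_lt (by linarith) hx1,
    show -(1 + α) + 1 = -α by ring, show 1 - α = -α + 1 by ring, rpow_add_one hx1.ne']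
  field_simp

theorem integrableOn_Ioi_parabolaBump_sub_mul_rpow (hα : α ∈ Ioo (0 : ℝ) 2)
    (hx : x ∈ Ioo (-1 : ℝ) 1) (hε : 0 < ε) (hεx : ε ≤ 1 - x) :
    IntegrableOn (fun y => (parabolaBump (x + y) - parabolaBump x) * |y| ^ (-(1 + α)))
      (Ioi ε) := by
  rw [← Ioc_union_Ioi_eq_Ioi hεx]
  refine (integrableOn_Ioc_parabolaBump_sub_mul_rpow hα.2 hx hε hεx).union ?_
  have hpow : IntegrableOn (fun y : ℝ => y ^ (-(1 + α))) (Ioi (1 - x)) :=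
    integrableOn_Ioi_rpow_of_lt (by linarith [hα.1]) (hε.trans_le hεx)
  exact IntegrableOn.congr_fun (hpow.const_mul (-((1 + x) * (1 - x))))
    (fun y hy => (parabolaBump_sub_mul_rpow_of_ge hx (le_of_lt hy)).symm) measurableSet_Ioi

theorem integral_Ioi_parabolaBump_sub_mul_rpow (hα : α ∈ Ioo (0 : ℝ) 2) (hα1 : α ≠ 1)
    (hx : x ∈ Ioo (-1 : ℝ) 1) (hε : 0 < ε) (hεx : ε ≤ 1 - x) :
    ∫ y in Ioi ε, (parabolaBump (x + y) - parabolaBump x) * |y| ^ (-(1 + α)) =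
      2 * x * ε ^ (1 - α) / (1 - α) + ε ^ (2 - α) / (2 - α) -
        (1 - x) ^ (1 - α) * ((1 + x) / α + 2 * x / (1 - α) + (1 - x) / (2 - α)) := by
  have hint := integrableOn_Ioi_parabolaBump_sub_mul_rpow hα hx hε hεx
  rw [← Ioc_union_Ioi_eq_Ioi hεx] at hint ⊢
  rw [setIntegral_union Ioc_disjoint_Ioi_same measurableSet_Ioi
      (hint.mono_set subset_union_left) (hint.mono_set subset_union_right),
    integral_Ioc_parabolaBump_sub_mul_rpow hα.2 hα1 hx hε hεx,
    integral_Ioi_one_sub_parabolaBump_sub_mul_rpow hα.1 hx,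
    show 2 - α = 1 - α + 1 by ring, rpow_add_one (by linarith [hx.2] : (1 - x) ≠ 0)]
  have : 1 - α ≠ 0 := sub_ne_zero.mpr hα1.symm
  have : 1 - α + 1 ≠ 0 := by linarith [hα.2]
  field_simp
  ring

theorem integrableOn_abs_gt_parabolaBump_sub_mul_rpow (hα : α ∈ Ioo (0 : ℝ) 2)
    (hx : x ∈ Ioo (-1 : ℝ) 1) (hε : 0 < ε) (hεx : ε ≤ 1 - x) (hεx' : ε ≤ 1 + x) :
    IntegrableOn (fun y => (parabolaBump (x + y) - parabolaBump x) * |y| ^ (-(1 + α)))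
      {y | ε < |y|} := by
  have hneg := integrableOn_Ioi_parabolaBump_sub_mul_rpow hα (x := -x)
    ⟨by linarith [hx.2], by linarith [hx.1]⟩ hε (by linarith)
  rw [← neg_neg ε] at hneg
  rw [setOf_lt_abs_eq]
  refine IntegrableOn.union ?_ (integrableOn_Ioi_parabolaBump_sub_mul_rpow hα hx hε hεx)
  simpa only [parabolaBump_add_neg_sub, neg_neg, abs_neg] using hneg.comp_neg_Iio

theorem integral_abs_gt_parabolaBump_sub_mul_rpow (hα : α ∈ Ioo (0 : ℝ) 2) (hα1 : α ≠ 1)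
    (hx : x ∈ Ioo (-1 : ℝ) 1) (hε : 0 < ε) (hεx : ε ≤ 1 - x) (hεx' : ε ≤ 1 + x) :
    ∫ y in {y | ε < |y|}, (parabolaBump (x + y) - parabolaBump x) * |y| ^ (-(1 + α)) =
      -((1 + x) ^ (1 - α) * ((1 - x) / α - 2 * x / (1 - α) + (1 + x) / (2 - α)))
        - (1 - x) ^ (1 - α) * ((1 + x) / α + 2 * x / (1 - α) + (1 - x) / (2 - α))
        + 2 / (2 - α) * ε ^ (2 - α) := by
  have hx' : -x ∈ Ioo (-1 : ℝ) 1 := ⟨by linarith [hx.2], by linarith [hx.1]⟩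
  have hint := integrableOn_abs_gt_parabolaBump_sub_mul_rpow hα hx hε hεx hεx'
  rw [setOf_lt_abs_eq] at hint ⊢
  rw [setIntegral_union ((Iic_disjoint_Ioi (by linarith)).mono_left Iio_subset_Iic_self)
      measurableSet_Ioi
      (hint.mono_set subset_union_left) (hint.mono_set subset_union_right),
    ← integral_Iic_eq_integral_Iio, ← integral_comp_neg_Ioi]
  simp only [parabolaBump_add_neg_sub, abs_neg]
  rw [integral_Ioi_parabolaBump_sub_mul_rpow hα hα1 hx' hε (by linarith),
    integral_Ioi_parabolaBump_sub_mul_rpow hα hα1 hx hε hεx, sub_neg_eq_add]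
  ring

theorem integral_abs_gt_parabolaBump_sub_sub_mul_rpow (δ : ℝ) (hα : α ∈ Ioo (0 : ℝ) 2)
    (hα1 : α ≠ 1) (hx : x ∈ Ioo (-1 : ℝ) 1) (hε : 0 < ε) (hεx : ε ≤ 1 - x) (hεx' : ε ≤ 1 + x) :
    ∫ y in {y : ℝ | ε < |y|}, (parabolaBump (x + y) - parabolaBump x
        - (if |y| < δ then y * (-(2 * x)) else 0)) * |y| ^ (-(1 + α)) =
      -((1 + x) ^ (1 - α) * ((1 - x) / α - 2 * x / (1 - α) + (1 + x) / (2 - α)))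
        - (1 - x) ^ (1 - α) * ((1 + x) / α + 2 * x / (1 - α) + (1 - x) / (2 - α))
        + 2 / (2 - α) * ε ^ (2 - α) := by
  calc _ = (∫ y in {y | ε < |y|}, (parabolaBump (x + y) - parabolaBump x) * |y| ^ (-(1 + α)))
        - ∫ y in {y | ε < |y|},
          (if |y| < δ then y * (-(2 * x)) else 0) * |y| ^ (-(1 + α)) := by
        rw [← integral_sub (integrableOn_abs_gt_parabolaBump_sub_mul_rpow hα hx hε hεx hεx')
          (integrableOn_abs_gt_ite_abs_lt_mul_rpow _ _ _ hε)]
        congr 1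
        funext y
        ring
    _ = _ := by
      rw [integral_abs_gt_parabolaBump_sub_mul_rpow hα hα1 hx hε hεx hεx',
        integral_abs_gt_ite_abs_lt_mul_rpow, sub_zero]

end Increment

theorem stmt_3_general (α : ℝ) (hα : α ∈ Set.Ioo (0 : ℝ) 2) (hα1 : α ≠ 1)
    (u : ℝ → ℝ) (hu : u = fun x => if x ∈ Set.Ioo (-1 : ℝ) 1 then 1 - x ^ 2 else 0)
    (x : ℝ) (hx : x ∈ Set.Ioo (-1 : ℝ) 1)
    (δ : ℝ) :
    Tendsto (fun ε : ℝ =>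
        ∫ y in {y : ℝ | ε < |y|},
          (u (x + y) - u x - (if |y| < δ then y * (-(2 * x)) else 0)) * |y| ^ (-(1 + α)))
      (nhdsWithin 0 (Set.Ioi 0))
      (nhds (-((1 + x) ^ (1 - α) * ((1 - x) / α - 2 * x / (1 - α) + (1 + x) / (2 - α)))
        - (1 - x) ^ (1 - α) * ((1 + x) / α + 2 * x / (1 - α) + (1 - x) / (2 - α)))) := by
  replace hu : u = parabolaBump := hu
  subst hu
  have hα2 : 0 < 2 - α := by linarith [hα.2]
  refine (tendsto_add_mul_rpow_nhdsGT_zero _ (2 / (2 - α)) hα2).congr' ?_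
  filter_upwards [Ioc_mem_nhdsGT (by linarith [hx.2] : (0 : ℝ) < 1 - x),
    Ioc_mem_nhdsGT (by linarith [hx.1] : (0 : ℝ) < 1 + x)] with ε ⟨hε, hεx⟩ ⟨_, hεx'⟩
  exact (integral_abs_gt_parabolaBump_sub_sub_mul_rpow δ hα hα1 hx hε hεx hεx').symm

/-- For u(x) = 1 - x² on (-1,1), 0 outside, and α ∈ (0,2), α ≠ 1, the nonlocal
operator (as a principal value) evaluates to the given closed form. -/
theorem stmt_3 (α : ℝ) (hα : α ∈ Set.Ioo (0 : ℝ) 2) (hα1 : α ≠ 1)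
    (u : ℝ → ℝ) (hu : u = fun x => if x ∈ Set.Ioo (-1 : ℝ) 1 then 1 - x ^ 2 else 0)
    (x : ℝ) (hx : x ∈ Set.Ioo (-1 : ℝ) 1)
    (δ : ℝ) (hδ : δ = min (1 + x) (1 - x)) :
    Tendsto (fun ε : ℝ =>
        ∫ y in {y : ℝ | ε < |y|},
          (u (x + y) - u x - (if |y| < δ then y * (-(2 * x)) else 0)) * |y| ^ (-(1 + α)))
      (nhdsWithin 0 (Set.Ioi 0))
      (nhds (-((1 + x) ^ (1 - α) * ((1 - x) / α - 2 * x / (1 - α) + (1 + x) / (2 - α)))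
        - (1 - x) ^ (1 - α) * ((1 + x) / α + 2 * x / (1 - α) + (1 - x) / (2 - α)))) :=
  stmt_3_general α hα hα1 u hu x hx δ
end

section
/- For α = 1 and u(x) = 1 - x² on (-1,1), u = 0 outside, for every x ∈ (-1,1) the principal value integral ∫_{ℝ∖{0}} [u(x+y) - u(x)] |y|^{-2} dy equals -(4 + 2x·ln((1-x)/(1+x))). -/
/-!
Split the truncated domain `{ε < |y|}` into the two rays `y > ε` and `y < -ε`; since `u` is even,
the left ray for `x` is the right ray for `-x`. On the right ray, for `ε < 1 - x`, the integrand is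
`-2x/y - 1` while `x + y < 1` and `-(1 - x²)/y²` afterwards, so the integral is elementary:
`-2x log((1 - x)/ε) - (1 - x - ε) - (1 + x)`. Adding the two rays gives
`-(4 + 2x log((1 - x)/(1 + x))) + 2ε` for all small `ε`, which tends to the claimed value.
-/

open MeasureTheory Filter Set

lemma integrableOn_Ioi_and_integral_eq_of_piecewise (c P m ε : ℝ) (hε : 0 < ε) (hεm : ε < m)
    (g : ℝ → ℝ) (hg₁ : EqOn g (fun y => c * y⁻¹ - 1) (Ioo ε m))
    (hg₂ : EqOn g (fun y => P * y ^ (-(2 : ℝ))) (Ici m)) :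
    IntegrableOn g (Ioi ε) ∧
      ∫ y in Ioi ε, g y = c * Real.log (m / ε) - (m - ε) + P / m := by
  have hm : 0 < m := hε.trans hεm
  have hinv : ContinuousOn (fun y : ℝ => c * y⁻¹) (Icc ε m) :=
    continuousOn_const.mul (continuousOn_inv₀.mono fun y hy => (hε.trans_le hy.1).ne')
  have hint₁ : IntegrableOn g (Ioo ε m) :=
    ((hinv.sub continuousOn_const).integrableOn_Icc.mono_set Ioo_subset_Icc_self).congr_fun
      hg₁.symm measurableSet_Ioo
  have hint₂ : IntegrableOn g (Ici m) := by
    rw [integrableOn_Ici_iff_integrableOn_Ioi]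
    have hpow : IntegrableOn (fun y : ℝ => P * y ^ (-(2 : ℝ))) (Ioi m) :=
      (integrableOn_Ioi_rpow_of_lt (by norm_num) hm).const_mul P
    exact hpow.congr_fun (fun y hy => (hg₂ (mem_Ici_of_Ioi hy)).symm) measurableSet_Ioi
  have hval₁ : ∫ y in Ioo ε m, g y = c * Real.log (m / ε) - (m - ε) := by
    rw [setIntegral_congr_fun measurableSet_Ioo hg₁, ← integral_Ioc_eq_integral_Ioo,
      ← intervalIntegral.integral_of_le hεm.le, intervalIntegral.integral_sub
        (hinv.intervalIntegrable_of_Icc hεm.le) intervalIntegrable_const,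
      intervalIntegral.integral_const_mul, integral_inv_of_pos hε hm,
      intervalIntegral.integral_const, smul_eq_mul, mul_one]
  have hval₂ : ∫ y in Ici m, g y = P / m := by
    rw [integral_Ici_eq_integral_Ioi, setIntegral_congr_fun measurableSet_Ioi
        (fun y hy => hg₂ (mem_Ici_of_Ioi hy)), integral_const_mul,
      integral_Ioi_rpow_of_lt (by norm_num) hm, show (-2 : ℝ) + 1 = -1 by norm_num,
      Real.rpow_neg_one]
    field_simp
  rw [← Ioo_union_Ici_eq_Ioi hεm]
  refine ⟨hint₁.union hint₂, ?_⟩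
  rw [setIntegral_union (disjoint_left.2 fun y hy hy' => hy.2.not_ge hy') measurableSet_Ici
    hint₁ hint₂, hval₁, hval₂]

lemma setIntegral_lt_abs (g : ℝ → ℝ) {ε : ℝ} (hε : 0 ≤ ε) (hg : IntegrableOn g (Ioi ε))
    (hg_neg : IntegrableOn (fun y => g (-y)) (Ioi ε)) :
    ∫ y in {y : ℝ | ε < |y|}, g y = (∫ y in Ioi ε, g y) + ∫ y in Ioi ε, g (-y) := by
  have hset : {y : ℝ | ε < |y|} = Ioi ε ∪ Iio (-ε) := by
    ext y
    simp only [mem_ofPred_eq, mem_union, mem_Ioi, mem_Iio, lt_abs, lt_neg]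
  have hneg : IntegrableOn g (Iio (-ε)) := by
    rw [← (Measure.measurePreserving_neg volume).integrableOn_comp_preimage
      (Homeomorph.neg ℝ).measurableEmbedding, neg_preimage, neg_Iio, neg_neg]
    exact hg_neg
  have hdisj : Disjoint (Ioi ε) (Iio (-ε)) :=
    disjoint_left.2 fun y (hy : ε < y) (hy' : y < -ε) => by linarith
  rw [hset, setIntegral_union hdisj measurableSet_Iio hg hneg, integral_comp_neg_Ioi,
    integral_Iic_eq_integral_Iio]

lemma abs_rpow_neg_two (y : ℝ) : |y| ^ (-(2 : ℝ)) = (y ^ 2)⁻¹ := by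
  rw [Real.rpow_neg (abs_nonneg y), Real.rpow_two, sq_abs]

noncomputable def bump (t : ℝ) : ℝ := if t ∈ Ioo (-1 : ℝ) 1 then 1 - t ^ 2 else 0

lemma bump_neg (t : ℝ) : bump (-t) = bump t := by
  simp only [bump, mem_Ioo, neg_lt, neg_neg, even_two.neg_pow, and_comm]

lemma integrableOn_Ioi_and_integral_bump_sub {x ε : ℝ} (hx : x ∈ Ioo (-1 : ℝ) 1) (hε : 0 < ε)
    (hεx : ε < 1 - x) :
    IntegrableOn (fun y => (bump (x + y) - bump x) * |y| ^ (-(2 : ℝ))) (Ioi ε) ∧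
      ∫ y in Ioi ε, (bump (x + y) - bump x) * |y| ^ (-(2 : ℝ)) =
        -2 * x * Real.log ((1 - x) / ε) - (1 - x - ε) - (1 + x) := by
  have hbx : bump x = 1 - x ^ 2 := if_pos hx
  have hPm : -((1 - x) * (1 + x)) / (1 - x) = -(1 + x) := by
    field_simp [(sub_pos.2 hx.2).ne']
  rw [sub_eq_add_neg _ (1 + x), ← hPm]
  refine integrableOn_Ioi_and_integral_eq_of_piecewise (-2 * x) _ _ ε hε hεx _
    (fun y hy => ?_) (fun y hy => ?_)
  · have hy0 : 0 < y := hε.trans hy.1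
    have hxy : x + y ∈ Ioo (-1 : ℝ) 1 := ⟨by linarith [hx.1], by linarith [hy.2]⟩
    rw [hbx, bump, if_pos hxy, abs_rpow_neg_two]
    field_simp
    ring
  · have hxy : x + y ∉ Ioo (-1 : ℝ) 1 := fun h => by linarith [h.2, mem_Ici.1 hy]
    have hy0 : 0 < y := (sub_pos.2 hx.2).trans_le hy
    rw [hbx, bump, if_neg hxy, abs_of_pos hy0]
    ring

lemma integral_lt_abs_bump_sub {x ε : ℝ} (hx : x ∈ Ioo (-1 : ℝ) 1) (hε : 0 < ε)
    (hεx : ε < 1 - x) (hεx' : ε < 1 + x) :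
    ∫ y in {y : ℝ | ε < |y|}, (bump (x + y) - bump x) * |y| ^ (-(2 : ℝ)) =
      -(4 + 2 * x * Real.log ((1 - x) / (1 + x))) + 2 * ε := by
  have hx' : -x ∈ Ioo (-1 : ℝ) 1 := ⟨by linarith [hx.2], by linarith [hx.1]⟩
  obtain ⟨hint, hval⟩ := integrableOn_Ioi_and_integral_bump_sub hx hε hεx
  obtain ⟨hint', hval'⟩ := integrableOn_Ioi_and_integral_bump_sub hx' hε (by linarith)
  have hreflect : (fun y => (bump (x + -y) - bump x) * |-y| ^ (-(2 : ℝ))) =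
      fun y => (bump (-x + y) - bump (-x)) * |y| ^ (-(2 : ℝ)) := by
    funext y
    rw [abs_neg, ← bump_neg (x + -y), neg_add, neg_neg, bump_neg]
  rw [setIntegral_lt_abs _ hε.le hint (hreflect ▸ hint'), hreflect, hval, hval',
    Real.log_div (sub_pos.2 hx.2).ne' hε.ne', Real.log_div (by linarith) hε.ne',
    Real.log_div (sub_pos.2 hx.2).ne' (by linarith), sub_neg_eq_add]
  ring

/-- For α = 1 and u(x) = 1 - x² on (-1,1), 0 outside, the principal value integral
∫ [u(x+y) - u(x)] |y|^{-2} dy equals -(4 + 2x ln((1-x)/(1+x))). -/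
theorem stmt_4 (u : ℝ → ℝ)
    (hu : u = fun x => if x ∈ Set.Ioo (-1 : ℝ) 1 then 1 - x ^ 2 else 0)
    (x : ℝ) (hx : x ∈ Set.Ioo (-1 : ℝ) 1) :
    Tendsto (fun ε : ℝ => ∫ y in {y : ℝ | ε < |y|}, (u (x + y) - u x) * |y| ^ (-(2 : ℝ)))
      (nhdsWithin 0 (Set.Ioi 0))
      (nhds (-(4 + 2 * x * Real.log ((1 - x) / (1 + x))))) := by
  have hlim : Tendsto (fun ε : ℝ => -(4 + 2 * x * Real.log ((1 - x) / (1 + x))) + 2 * ε)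
      (nhdsWithin 0 (Ioi 0)) (nhds (-(4 + 2 * x * Real.log ((1 - x) / (1 + x))))) := by
    refine ((continuous_const.add (continuous_const_mul 2)).tendsto' 0 _ ?_).mono_left
      nhdsWithin_le_nhds
    simp
  refine hlim.congr' ?_
  have hmin : (0 : ℝ) < min (1 - x) (1 + x) := lt_min (by linarith [hx.2]) (by linarith [hx.1])
  filter_upwards [Ioo_mem_nhdsGT hmin] with ε ⟨hε, hεx⟩
  rw [hu]
  exact (integral_lt_abs_bump_sub hx hε (hεx.trans_le (min_le_left _ _))
    (hεx.trans_le (min_le_right _ _))).symm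
end
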